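/- Let u be a profile of n voters' strict preference orders on a set A of p candidates (p ≥ 2), let s be any scoring (s_0 ≤ s_1 ≤ … ≤ s_{p-1}, s_0 < s_{p-1}), and let a ∈ A be a candidate in the winner set β_s(u). Then the score vector r(a) belongs to the weak Pareto boundary of the finite set R = {r(x) : x ∈ A} itself (not merely of its convex hull). -/
import Mathlib


/-- The de Borda estimate of candidate `a` under scores `s` for profile `u`,
where `u i a : Fin p` is the 0-indexed rank of candidate `a` in the preference
of voter `i` (`0` = top place).  A candidate with 0-indexed rank `r` obtains
`s (p-1-r)` points, i.e. `B_s(a) = ∑_i s_{p - rank_i(a)}` with 1-indexed ranks. -/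
def bordaEstimate {n p : ℕ} (u : Fin n → Equiv.Perm (Fin p)) (s : Fin p → ℝ)
    (a : Fin p) : ℝ :=
  ∑ i : Fin n, s (Fin.rev (u i a))

/-- The score vector of candidate `a` : its `k`-th component (`k : Fin (p-1)`,
0-indexed) is the number of voters who place `a` within the top `k+1` places. -/
def scoreVec {n p : ℕ} (u : Fin n → Equiv.Perm (Fin p)) (a : Fin p) :
    Fin (p - 1) → ℝ :=
  fun k => ((Finset.univ : Finset (Fin n)).filter fun i => ((u i a : Fin p) : ℕ) ≤ (k : ℕ)).card

/-- `f'` belongs to the Pareto boundary of `F`. -/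
def ParetoOpt {m : ℕ} (F : Set (Fin m → ℝ)) (f' : Fin m → ℝ) : Prop :=
  f' ∈ F ∧ ¬ ∃ f ∈ F, (∀ j, f' j ≤ f j) ∧ ∃ j0, f' j0 < f j0

/-- `f''` belongs to the weak Pareto boundary of `F`. -/
def WeakParetoOpt {m : ℕ} (F : Set (Fin m → ℝ)) (f'' : Fin m → ℝ) : Prop :=
  f'' ∈ F ∧ ¬ ∃ f ∈ F, ∀ j, f'' j < f j

lemma telescope_aux (m : ℕ) (S : ℕ → ℝ) (r : ℕ) (hr : r ≤ m) :
    ∑ k ∈ Finset.range m, (if r ≤ k then S (m - k) - S (m - 1 - k) else 0)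
      = S (m - r) - S 0 := by
  rw [← Finset.sum_range_reflect]
  have hcongr : ∀ j ∈ Finset.range m,
      (if r ≤ m - 1 - j then S (m - (m - 1 - j)) - S (m - 1 - (m - 1 - j)) else 0)
        = (if j < m - r then S (j + 1) - S j else 0) := by
    intro j hj
    simp only [Finset.mem_range] at hj
    by_cases h : j < m - r
    · rw [if_pos (by omega), if_pos h]
      have e1 : m - (m - 1 - j) = j + 1 := by omega
      have e2 : m - 1 - (m - 1 - j) = j := by omega
      rw [e1, e2]
    · rw [if_neg (by omega), if_neg h]
  rw [Finset.sum_congr rfl hcongr, ← Finset.sum_filter]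
  have : (Finset.range m).filter (fun j => j < m - r) = Finset.range (m - r) := by
    ext x; simp only [Finset.mem_filter, Finset.mem_range]; omega
  rw [this, Finset.sum_range_sub]

lemma borda_decomp {n p : ℕ} (hp : 2 ≤ p) (u : Fin n → Equiv.Perm (Fin p))
    (s : Fin p → ℝ) (S : ℕ → ℝ) (hSval : ∀ (m : ℕ) (h : m < p), S m = s ⟨m, h⟩)
    (x : Fin p) :
    bordaEstimate u s x
      = n * S 0 + ∑ k : Fin (p - 1),
          (S (p - 1 - (k : ℕ)) - S (p - 2 - (k : ℕ))) * scoreVec u x k := by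
  unfold bordaEstimate
  have hrev : ∀ i : Fin n, s (Fin.rev (u i x)) = S (p - 1 - ((u i x : Fin p) : ℕ)) := by
    intro i
    rw [hSval (p - 1 - ((u i x : Fin p) : ℕ)) (by omega)]
    congr 1
    exact Fin.ext (by simp only [Fin.val_rev]; omega)
  calc ∑ i : Fin n, s (Fin.rev (u i x))
      = ∑ i : Fin n, (S 0 + ∑ k ∈ Finset.range (p - 1),
          (if ((u i x : Fin p) : ℕ) ≤ k then S (p - 1 - k) - S (p - 1 - 1 - k) else 0)) := by
        refine Finset.sum_congr rfl fun i _ => ?_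
        rw [hrev i]
        have ht := telescope_aux (p - 1) S ((u i x : Fin p) : ℕ) (by omega)
        linarith [ht]
    _ = n * S 0 + ∑ k ∈ Finset.range (p - 1), ∑ i : Fin n,
          (if ((u i x : Fin p) : ℕ) ≤ k then S (p - 1 - k) - S (p - 1 - 1 - k) else 0) := by
        rw [Finset.sum_add_distrib, Finset.sum_const, Finset.card_univ, Fintype.card_fin,
          nsmul_eq_mul, Finset.sum_comm]
    _ = n * S 0 + ∑ k ∈ Finset.range (p - 1), (S (p - 1 - k) - S (p - 2 - k)) *
          (((Finset.univ : Finset (Fin n)).filter fun i => ((u i x : Fin p) : ℕ) ≤ k).card : ℝ) := by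
        congr 1
        refine Finset.sum_congr rfl fun k _ => ?_
        have e : p - 1 - 1 - k = p - 2 - k := by omega
        rw [e, Finset.sum_ite, Finset.sum_const, Finset.sum_const_zero, add_zero,
          nsmul_eq_mul, mul_comm]
    _ = _ := by
        rw [Finset.sum_range fun k => (S (p - 1 - k) - S (p - 2 - k)) *
          (((Finset.univ : Finset (Fin n)).filter fun i => ((u i x : Fin p) : ℕ) ≤ k).card : ℝ)]
        rfl


/-- If `a` is a de Borda winner for a scoring `s` (i.e. `s_0 ≤ ... ≤ s_{p-1}`
with `s_0 < s_{p-1}`), then its score vector belongs to the weak Pareto boundary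
of the finite set `R` of score vectors itself. -/
theorem winner_mem_weakParetoBoundary_R {n p : ℕ} (hn : 1 ≤ n) (hp : 2 ≤ p)
    (u : Fin n → Equiv.Perm (Fin p)) (s : Fin p → ℝ) (hmono : Monotone s)
    (hs : s ⟨0, by omega⟩ < s ⟨p - 1, by omega⟩)
    (a : Fin p) (ha : ∀ b : Fin p, bordaEstimate u s b ≤ bordaEstimate u s a) :
    WeakParetoOpt (Set.range (scoreVec u)) (scoreVec u a) := by
  set S : ℕ → ℝ := fun m => s ⟨min m (p - 1), by omega⟩ with hSdef
  have hSval : ∀ (m : ℕ) (h : m < p), S m = s ⟨m, h⟩ := by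
    intro m h
    simp only [hSdef]
    congr 1
    exact Fin.ext (by simp; omega)
  have hSmono : ∀ x y : ℕ, x ≤ y → S x ≤ S y := by
    intro x y hxy
    exact hmono (by simp only [Fin.mk_le_mk]; omega)
  refine ⟨⟨a, rfl⟩, ?_⟩
  rintro ⟨f, ⟨b, rfl⟩, hf⟩
  set w : Fin (p - 1) → ℝ := fun k => S (p - 1 - (k : ℕ)) - S (p - 2 - (k : ℕ)) with hw
  have hw0 : ∀ k, 0 ≤ w k := by
    intro k
    simp only [hw]
    exact sub_nonneg.mpr (hSmono _ _ (by omega))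
  have hsum : ∑ k : Fin (p - 1), w k = S (p - 1) - S 0 := by
    have ht := telescope_aux (p - 1) S 0 (by omega)
    simp only [Nat.zero_le, if_true, Nat.sub_zero] at ht
    simp only [hw]
    rw [Fin.sum_univ_eq_sum_range (fun k => S (p - 1 - k) - S (p - 2 - k)), ← ht]
    refine Finset.sum_congr rfl fun k hk => ?_
    congr 2
    all_goals omega
  have hpos : 0 < S (p - 1) - S 0 := by
    rw [hSval 0 (by omega), hSval (p - 1) (by omega)]
    linarith [hs]
  have hex : ∃ k : Fin (p - 1), 0 < w k := by
    by_contra hc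
    push_neg at hc
    have : ∑ k : Fin (p - 1), w k ≤ 0 :=
      Finset.sum_nonpos (fun k _ => hc k)
    rw [hsum] at this
    linarith
  obtain ⟨k0, hk0⟩ := hex
  have hlt : ∑ k : Fin (p - 1), w k * scoreVec u a k
      < ∑ k : Fin (p - 1), w k * scoreVec u b k := by
    apply Finset.sum_lt_sum
    · intro k _
      exact mul_le_mul_of_nonneg_left (le_of_lt (hf k)) (hw0 k)
    · exact ⟨k0, Finset.mem_univ k0, mul_lt_mul_of_pos_left (hf k0) hk0⟩
  have h1 := borda_decomp hp u s S hSval a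
  have h2 := borda_decomp hp u s S hSval b
  have hba := ha b
  rw [h1, h2] at hba
  simp only [hw] at hlt
  linarith
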